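/- For any word ω ∈ {1,2,3,4}*, E(ω1, ω2) = (13/84) E(ω), where E(ω1,ω2) is the distortion error on J_{ω1}∪J_{ω2} with respect to its centroid. -/

import Mathlib

/-!
Self-similarity moves integrals over a basic square to integrals against P:
∫_{J_ω} f dP = p_ω ∫ f ∘ S_ω dP, where p_ω is the product of the weights along ω, and S_ω
scales distances by 3^{-|ω|}. (P lives on [0,1]², since each S_i divides the distance to the
square by 3.) Hence E(ω) = p_ω 9^{-|ω|} V, where the mean (1/2, 3/4) and the variance V = 7/32
of P are read off from the self-similarity equation. The centroid of J_{ω1} ∪ J_{ω2} is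
S_ω(1/2, 1/4), at distance 3^{-|ω|-1} from the centroids S_ω S_i (1/2, 3/4) of both halves, so
E(ω1, ω2) = 2 · (p_ω / 8) · 9^{-|ω|-1} (V + 1) = p_ω 9^{-|ω|} · 13/384 = (13/84) E(ω).
-/

open MeasureTheory ProbabilityTheory
open scoped ENNReal

noncomputable section

abbrev E2 : Type := EuclideanSpace ℝ (Fin 2)

/-- The point (a,b) of the Euclidean plane. -/
def pt (a b : ℝ) : E2 := (WithLp.equiv 2 (Fin 2 → ℝ)).symm ![a, b]

/-- The four generating similarities S₁,…,S₄ (indexed 0,…,3) of the Sierpiński carpet. -/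
def S : Fin 4 → E2 → E2
  | 0 => fun x => pt (x 0 / 3) (x 1 / 3)
  | 1 => fun x => pt (x 0 / 3 + 2/3) (x 1 / 3)
  | 2 => fun x => pt (x 0 / 3) (x 1 / 3 + 2/3)
  | 3 => fun x => pt (x 0 / 3 + 2/3) (x 1 / 3 + 2/3)

/-- The self-affinity equation P = (1/8)P∘S₁⁻¹ + (1/8)P∘S₂⁻¹ + (3/8)P∘S₃⁻¹ + (3/8)P∘S₄⁻¹. -/
def carpetEq (P : Measure E2) : Prop :=
  P = (1/8 : ℝ≥0∞) • P.map (S 0) + (1/8 : ℝ≥0∞) • P.map (S 1)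
    + (3/8 : ℝ≥0∞) • P.map (S 2) + (3/8 : ℝ≥0∞) • P.map (S 3)

/-- The unit square [0,1]². -/
def unitSq : Set E2 := {x | ∀ i, x i ∈ Set.Icc (0:ℝ) 1}

/-- S_ω = S_{ω₁} ∘ ⋯ ∘ S_{ω_k} for a word ω. -/
def Sw (w : List (Fin 4)) : E2 → E2 := fun x => w.foldr S x

/-- The basic square J_ω = S_ω([0,1]²). -/
def Jw (w : List (Fin 4)) : Set E2 := Sw w '' unitSq

/-- The basic square J_i of the first level. -/
def Jset (i : Fin 4) : Set E2 := S i '' unitSq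

/-- The mass centroid (conditional expectation) of P on a set A. -/
def ctr (P : Measure E2) (A : Set E2) : E2 := (P A).toReal⁻¹ • ∫ x in A, x ∂P

/-- E(ω) : distortion error on J_ω about its centroid a(ω) = S_ω(1/2,3/4). -/
def Err (P : Measure E2) (w : List (Fin 4)) : ℝ :=
  ∫ x in Jw w, ‖x - Sw w (pt (1/2) (3/4))‖^2 ∂P

/-- E(ωi, ωj) : distortion error on J_{ωi} ∪ J_{ωj} about its centroid. -/
def Epair (P : Measure E2) (w : List (Fin 4)) (i j : Fin 4) : ℝ :=
  ∫ x in (Jw (w ++ [i]) ∪ Jw (w ++ [j])),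
    ‖x - ctr P (Jw (w ++ [i]) ∪ Jw (w ++ [j]))‖^2 ∂P

open Metric Topology
open scoped NNReal

lemma integral_norm_sub_sq_eq_add {α F : Type*} [MeasurableSpace α] [NormedAddCommGroup F]
    [InnerProductSpace ℝ F] [CompleteSpace F] {μ : Measure α} [IsProbabilityMeasure μ]
    {X : α → F} (hX : Integrable X μ) (hX2 : Integrable (fun a => ‖X a - μ[X]‖ ^ 2) μ) (q : F) :
    ∫ a, ‖X a - q‖ ^ 2 ∂μ = ∫ a, ‖X a - μ[X]‖ ^ 2 ∂μ + ‖μ[X] - q‖ ^ 2 := by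
  have hexpand : ∀ a, ‖X a - q‖ ^ 2
      = ‖X a - μ[X]‖ ^ 2 + (2 * inner ℝ (μ[X] - q) (X a - μ[X]) + ‖μ[X] - q‖ ^ 2) := fun a => by
    rw [← sub_add_sub_cancel (X a) μ[X] q, add_comm, norm_add_sq_real]
    ring
  have hcentered : Integrable (fun a => X a - μ[X]) μ := hX.sub (integrable_const _)
  have hinner : Integrable (fun a => 2 * inner ℝ (μ[X] - q) (X a - μ[X])) μ :=
    (hcentered.const_inner _).const_mul 2
  simp_rw [hexpand]
  rw [integral_add hX2, integral_add hinner (integrable_const _), integral_const_mul,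
    integral_inner hcentered, integral_sub hX (integrable_const _)]
  · simp
  · exact hinner.add (integrable_const _)

lemma eq_pt (v : E2) : v = pt (v 0) (v 1) := by
  ext i; fin_cases i <;> rfl

lemma pt_sub_pt (a b c d : ℝ) : pt a b - pt c d = pt (a - c) (b - d) := by
  ext i; fin_cases i <;> rfl

lemma smul_pt (c a b : ℝ) : c • pt a b = pt (c * a) (c * b) := by
  ext i; fin_cases i <;> rfl

lemma norm_pt_sq (a b : ℝ) : ‖pt a b‖ ^ 2 = a ^ 2 + b ^ 2 := by
  simp [EuclideanSpace.norm_sq_eq, Fin.sum_univ_two, pt]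

def shift : Fin 4 → E2 := ![pt 0 0, pt (2/3) 0, pt 0 (2/3), pt (2/3) (2/3)]

lemma S_apply (i : Fin 4) (x : E2) : S i x = (3:ℝ)⁻¹ • x + shift i := by
  fin_cases i <;> ext j <;> fin_cases j <;> simp [S, shift, pt] <;> ring

lemma S_sub_S (i : Fin 4) (x y : E2) : S i x - S i y = (3:ℝ)⁻¹ • (x - y) := by
  simp [S_apply, smul_sub]

lemma dist_S_S (i : Fin 4) (x y : E2) : dist (S i x) (S i y) = dist x y / 3 := by
  rw [dist_eq_norm, dist_eq_norm, S_sub_S, norm_smul]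
  norm_num
  ring

lemma isClosedEmbedding_S (i : Fin 4) : IsClosedEmbedding (S i) := by
  refine AntilipschitzWith.isClosedEmbedding (K := 3) ?_ ?_
  · refine AntilipschitzWith.of_le_mul_dist fun x y => ?_
    rw [dist_S_S]; push_cast; linarith
  · refine (LipschitzWith.of_dist_le_mul (K := 1) fun x y => ?_).uniformContinuous
    rw [dist_S_S]; push_cast; linarith [dist_nonneg (x := x) (y := y)]

@[fun_prop]
lemma continuous_S (i : Fin 4) : Continuous (S i) := (isClosedEmbedding_S i).continuous

lemma injective_S (i : Fin 4) : Function.Injective (S i) := (isClosedEmbedding_S i).injective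

lemma Sw_cons (i : Fin 4) (w : List (Fin 4)) (x : E2) : Sw (i :: w) x = S i (Sw w x) := rfl

lemma Sw_append (w v : List (Fin 4)) (x : E2) : Sw (w ++ v) x = Sw w (Sw v x) := by
  simp [Sw, List.foldr_append]

lemma Sw_sub_Sw (w : List (Fin 4)) (x y : E2) :
    Sw w x - Sw w y = (3:ℝ)⁻¹ ^ w.length • (x - y) := by
  induction w with
  | nil => simp [Sw]
  | cons i w ih => rw [Sw_cons, Sw_cons, S_sub_S, ih, smul_smul, List.length_cons, pow_succ']

lemma Sw_eq_smul_add (w : List (Fin 4)) (x : E2) :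
    Sw w x = (3:ℝ)⁻¹ ^ w.length • x + Sw w 0 := by
  rw [← sub_zero x, ← Sw_sub_Sw, sub_zero, sub_add_cancel]

lemma norm_Sw_sub_Sw_sq (w : List (Fin 4)) (x y : E2) :
    ‖Sw w x - Sw w y‖ ^ 2 = (9:ℝ)⁻¹ ^ w.length * ‖x - y‖ ^ 2 := by
  rw [Sw_sub_Sw, norm_smul, mul_pow, norm_pow, norm_inv, ← pow_mul, mul_comm w.length, pow_mul]
  norm_num

@[fun_prop]
lemma continuous_Sw (w : List (Fin 4)) : Continuous (Sw w) := by
  rw [funext (Sw_eq_smul_add w)]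
  fun_prop

lemma injective_Sw (w : List (Fin 4)) : Function.Injective (Sw w) := fun x y h => by
  have hxy := Sw_sub_Sw w x y
  rw [h, sub_self, eq_comm, smul_eq_zero] at hxy
  exact sub_eq_zero.1 (hxy.resolve_left (by positivity))

lemma Sw_midpoint (w : List (Fin 4)) (u v : E2) :
    (2:ℝ)⁻¹ • (Sw w u + Sw w v) = Sw w ((2:ℝ)⁻¹ • (u + v)) := by
  rw [Sw_eq_smul_add w ((2:ℝ)⁻¹ • (u + v)), Sw_eq_smul_add w u, Sw_eq_smul_add w v]
  module

lemma isCompact_unitSq : IsCompact unitSq := by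
  have : unitSq = WithLp.toLp 2 '' Set.Icc (0 : Fin 2 → ℝ) 1 := by
    ext x
    refine ⟨fun hx => ⟨x.ofLp, ⟨fun i => (hx i).1, fun i => (hx i).2⟩, rfl⟩, ?_⟩
    rintro ⟨y, hy, rfl⟩ i
    exact ⟨hy.1 i, hy.2 i⟩
  rw [this]
  exact isCompact_Icc.image (PiLp.continuous_toLp 2 _)

lemma S_mapsTo_unitSq (i : Fin 4) : Set.MapsTo (S i) unitSq unitSq := by
  intro x hx j
  have h0 := hx 0
  have h1 := hx 1
  simp only [Set.mem_Icc] at h0 h1 ⊢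
  fin_cases i <;> fin_cases j <;> simp [S, pt] <;> constructor <;> linarith

lemma Sw_mapsTo_unitSq (w : List (Fin 4)) : Set.MapsTo (Sw w) unitSq unitSq := by
  induction w with
  | nil => exact Set.mapsTo_id _
  | cons i w ih => exact (S_mapsTo_unitSq i).comp ih

lemma Jw_subset_unitSq (w : List (Fin 4)) : Jw w ⊆ unitSq := (Sw_mapsTo_unitSq w).image_subset

lemma measurableSet_Jw (w : List (Fin 4)) : MeasurableSet (Jw w) :=
  (isCompact_unitSq.image (continuous_Sw w)).isClosed.measurableSet

lemma Jw_append (w v : List (Fin 4)) : Jw (w ++ v) = Sw w '' Jw v := by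
  rw [Jw, Jw, ← Set.image_comp]
  exact Set.image_congr fun x _ => Sw_append w v x

lemma Jw_cons (i : Fin 4) (w : List (Fin 4)) : Jw (i :: w) = S i '' Jw w := Jw_append [i] w

-- Distinct first-level squares are separated by a gap of width 1/3 in some coordinate.
lemma S_ne_S_of_ne (i j : Fin 4) (hij : i ≠ j) {x y : E2} (hx : x ∈ unitSq) (hy : y ∈ unitSq) :
    S i x ≠ S j y := by
  intro h
  have h0 := congrArg (· 0) h
  have h1 := congrArg (· 1) h
  have hx0 := hx 0; have hx1 := hx 1; have hy0 := hy 0; have hy1 := hy 1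
  simp only [Set.mem_Icc] at hx0 hx1 hy0 hy1
  fin_cases i <;> fin_cases j <;> simp [S, pt] at h0 h1 hij <;> linarith

lemma disjoint_Jw_append_singleton (w : List (Fin 4)) {i j : Fin 4} (hij : i ≠ j) :
    Disjoint (Jw (w ++ [i])) (Jw (w ++ [j])) := by
  rw [Jw_append, Jw_append]
  refine Set.disjoint_image_of_injective ?_ (Set.disjoint_left.2 ?_)
  · exact injective_Sw w
  · rintro _ ⟨x, hx, rfl⟩ ⟨y, hy, hxy⟩
    exact S_ne_S_of_ne j i hij.symm hy hx hxy

def prob : Fin 4 → ℝ≥0 := ![1/8, 1/8, 3/8, 3/8]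

lemma sum_prob : ∑ i, prob i = 1 := by
  norm_num [Fin.sum_univ_four, prob, Matrix.cons_val_two, Matrix.cons_val_three]

lemma carpetEq_iff (P : Measure E2) : carpetEq P ↔ P = ∑ i, prob i • P.map (S i) := by
  have h3 : ((3/8 : ℝ≥0) : ℝ≥0∞) = 3/8 := by norm_num [ENNReal.coe_div]
  rw [carpetEq, Fin.sum_univ_four]
  simp only [prob, ENNReal.smul_def]
  simp [h3]

def wordProb (w : List (Fin 4)) : ℝ := (w.map fun i => (prob i : ℝ)).prod

lemma wordProb_cons (i : Fin 4) (w : List (Fin 4)) : wordProb (i :: w) = prob i * wordProb w := by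
  simp [wordProb]

lemma wordProb_append (w v : List (Fin 4)) : wordProb (w ++ v) = wordProb w * wordProb v := by
  simp [wordProb]

lemma wordProb_pos (w : List (Fin 4)) : 0 < wordProb w :=
  List.prod_pos fun p hp => by
    obtain ⟨i, -, rfl⟩ := List.mem_map.1 hp
    fin_cases i <;> norm_num [prob]

section SelfSimilar

variable {P : Measure E2}

lemma measure_eq_sum (hP : carpetEq P) {s : Set E2} (hs : MeasurableSet s) :
    P s = ∑ i, (prob i : ℝ≥0∞) * P (S i ⁻¹' s) := by
  conv_lhs => rw [(carpetEq_iff P).1 hP]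
  simp [Measure.coe_finsetSum, Measure.map_apply (isClosedEmbedding_S _).measurable hs]

lemma integral_eq_sum {F : Type*} [NormedAddCommGroup F] [NormedSpace ℝ F] (hP : carpetEq P)
    {g : E2 → F} (hg : ∀ i, Integrable (fun x => g (S i x)) P) :
    ∫ x, g x ∂P = ∑ i, (prob i : ℝ) • ∫ x, g (S i x) ∂P := by
  have hS := fun i => (isClosedEmbedding_S i).measurableEmbedding
  conv_lhs => rw [(carpetEq_iff P).1 hP]
  rw [integral_finsetSum_measure]
  · simp only [integral_smul_nnreal_measure, (hS _).integral_map, NNReal.smul_def]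
  · intro i _
    exact ((hS i).integrable_map_iff.2 (hg i)).smul_measure_nnreal

lemma measurableSet_le_infDist {X : Type*} [PseudoMetricSpace X] [MeasurableSpace X]
    [OpensMeasurableSpace X] (s : Set X) (r : ℝ) : MeasurableSet {x | r ≤ infDist x s} :=
  measurableSet_le measurable_const (continuous_infDist_pt s).measurable

lemma infDist_S_le (i : Fin 4) (x : E2) : infDist (S i x) unitSq ≤ infDist x unitSq / 3 := by
  obtain ⟨z, hz, hxz⟩ := isCompact_unitSq.exists_infDist_eq_dist ⟨0, fun _ => by simp⟩ x
  calc infDist (S i x) unitSq ≤ dist (S i x) (S i z) :=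
        infDist_le_dist_of_mem (S_mapsTo_unitSq i hz)
    _ = infDist x unitSq / 3 := by rw [dist_S_S, hxz]

lemma measure_infDist_ge_le (hP : carpetEq P) (r : ℝ) :
    P {x | r ≤ infDist x unitSq} ≤ P {x | 3 * r ≤ infDist x unitSq} := by
  calc P {x | r ≤ infDist x unitSq}
      = ∑ i, (prob i : ℝ≥0∞) * P (S i ⁻¹' {x | r ≤ infDist x unitSq}) :=
        measure_eq_sum hP (measurableSet_le_infDist _ r)
    _ ≤ ∑ i, (prob i : ℝ≥0∞) * P {x | 3 * r ≤ infDist x unitSq} := by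
      gcongr with i
      intro x hx
      show 3 * r ≤ infDist x unitSq
      linarith [infDist_S_le i x, show r ≤ infDist (S i x) unitSq from hx]
    _ = P {x | 3 * r ≤ infDist x unitSq} := by
      rw [← Finset.sum_mul, ← ENNReal.ofNNReal_finsetSum, sum_prob, ENNReal.coe_one, one_mul]

end SelfSimilar

section FiniteMeasure

variable {P : Measure E2} [IsFiniteMeasure P]

lemma measure_infDist_ge_eq_zero (hP : carpetEq P) {r : ℝ} (hr : 0 < r) :
    P {x | r ≤ infDist x unitSq} = 0 := by
  set A : ℕ → Set E2 := fun n => {x | 3 ^ n * r ≤ infDist x unitSq}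
  have hle : ∀ n, P (A 0) ≤ P (A n) := by
    intro n
    induction n with
    | zero => rfl
    | succ n ih =>
      have h := measure_infDist_ge_le hP (3 ^ n * r)
      rw [← mul_assoc, ← pow_succ'] at h
      exact ih.trans h
  have hanti : Antitone A := fun n m hnm x (hx : 3 ^ m * r ≤ infDist x unitSq) =>
    show 3 ^ n * r ≤ infDist x unitSq from le_trans (by gcongr; norm_num) hx
  have hempty : ⋂ n, A n = ∅ := by
    refine Set.eq_empty_of_forall_notMem fun x hx => ?_
    obtain ⟨n, hn⟩ := pow_unbounded_of_one_lt (infDist x unitSq / r) (by norm_num : (1:ℝ) < 3)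
    have : 3 ^ n * r ≤ infDist x unitSq := Set.mem_iInter.1 hx n
    rw [div_lt_iff₀ hr] at hn
    linarith
  have hlim := tendsto_measure_iInter_atTop (μ := P)
    (fun n => (measurableSet_le_infDist _ _).nullMeasurableSet) hanti ⟨0, measure_ne_top P _⟩
  rw [hempty, measure_empty] at hlim
  simpa [A] using le_antisymm (ge_of_tendsto hlim (Filter.Eventually.of_forall hle)) zero_le

lemma ae_mem_unitSq (hP : carpetEq P) : ∀ᵐ x ∂P, x ∈ unitSq := by
  have hsub : unitSqᶜ ⊆ ⋃ n : ℕ, {x | 1 / (n + 1 : ℝ) ≤ infDist x unitSq} := by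
    intro x hx
    have hpos := (isCompact_unitSq.isClosed.notMem_iff_infDist_pos ⟨0, fun _ => by simp⟩).1 hx
    obtain ⟨n, hn⟩ := exists_nat_one_div_lt hpos
    exact Set.mem_iUnion.2 ⟨n, hn.le⟩
  exact measure_mono_null hsub
    (measure_iUnion_null fun n => measure_infDist_ge_eq_zero hP (by positivity))

lemma integrable_of_continuous {F : Type*} [NormedAddCommGroup F] (hP : carpetEq P) {f : E2 → F}
    (hf : Continuous f) : Integrable f P := by
  obtain ⟨C, hC⟩ := isCompact_unitSq.exists_bound_of_continuousOn hf.continuousOn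
  refine (integrable_const C).mono' hf.aestronglyMeasurable ?_
  filter_upwards [ae_mem_unitSq hP] with x hx
  exact hC x hx

lemma setIntegral_Jw {F : Type*} [NormedAddCommGroup F] [NormedSpace ℝ F] (hP : carpetEq P)
    {f : E2 → F} (hf : Continuous f) (w : List (Fin 4)) :
    ∫ x in Jw w, f x ∂P = wordProb w • ∫ x, f (Sw w x) ∂P := by
  induction w generalizing f with
  | nil =>
    rw [Measure.restrict_eq_self_of_ae_mem (by simpa [Jw, Sw] using ae_mem_unitSq hP)]
    simp [wordProb, Sw]
  | cons i w ih =>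
    have hind : ∀ j, (fun x => (Jw (i :: w)).indicator f (S j x))
        = (S j ⁻¹' Jw (i :: w)).indicator (f ∘ S j) :=
      fun j => funext fun x => (Set.indicator_comp_right (S j)).symm
    rw [← integral_indicator (measurableSet_Jw _), integral_eq_sum hP fun j => by
      rw [hind]
      exact (integrable_of_continuous hP (hf.comp (continuous_S j))).indicator
        ((measurableSet_Jw _).preimage (continuous_S j).measurable)]
    rw [Finset.sum_eq_single i]
    · rw [hind, Jw_cons, Set.preimage_image_eq _ (injective_S i), integral_indicator
        (measurableSet_Jw w), ih (hf.comp (continuous_S i)), wordProb_cons, mul_smul]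
      rfl
    · intro j _ hji
      rw [integral_eq_zero_of_ae, smul_zero]
      filter_upwards [ae_mem_unitSq hP] with x hx
      refine Set.indicator_of_notMem ?_ f
      rw [Jw_cons]
      rintro ⟨y, hy, hyx⟩
      exact S_ne_S_of_ne i j hji.symm (Jw_subset_unitSq w hy) hx hyx
    · simp

end FiniteMeasure

section ProbabilityMeasure

variable {P : Measure E2} [IsProbabilityMeasure P]

lemma measureReal_Jw (hP : carpetEq P) (w : List (Fin 4)) : P.real (Jw w) = wordProb w := by
  simpa using setIntegral_Jw hP (continuous_const (y := (1 : ℝ))) w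

lemma integral_id_eq (hP : carpetEq P) : ∫ x, x ∂P = pt (1/2) (3/4) := by
  set m := ∫ x, x ∂P
  have hS : ∀ i, ∫ x, S i x ∂P = (3:ℝ)⁻¹ • m + shift i := fun i => by
    simp_rw [S_apply]
    rw [integral_add ?_ (integrable_const _), integral_smul]
    · simp [m]
    · exact (integrable_of_continuous hP continuous_id).smul (3:ℝ)⁻¹
  have h := integral_eq_sum hP (g := id) fun i => integrable_of_continuous hP (continuous_S i)
  simp only [id, hS] at h
  have h0 := congrArg (· 0) h
  have h1 := congrArg (· 1) h
  simp [Fin.sum_univ_four, prob, shift, pt] at h0 h1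
  rw [eq_pt m]
  congr 1 <;> linarith

lemma integral_norm_S_sub_sq (hP : carpetEq P) (i : Fin 4) (q : E2) :
    ∫ x, ‖S i x - q‖ ^ 2 ∂P = (9:ℝ)⁻¹ *
      (∫ x, ‖x - pt (1/2) (3/4)‖ ^ 2 ∂P + ‖pt (1/2) (3/4) - (3:ℝ) • (q - shift i)‖ ^ 2) := by
  have hS : ∀ x, ‖S i x - q‖ ^ 2 = (9:ℝ)⁻¹ * ‖x - (3:ℝ) • (q - shift i)‖ ^ 2 := fun x => by
    rw [S_apply, show (3:ℝ)⁻¹ • x + shift i - q = (3:ℝ)⁻¹ • (x - (3:ℝ) • (q - shift i)) by module,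
      norm_smul, mul_pow]
    norm_num
  simp_rw [hS]
  rw [integral_const_mul, ← integral_id_eq hP]
  exact congrArg _ (integral_norm_sub_sq_eq_add (X := fun x => x)
    (integrable_of_continuous hP continuous_id) (integrable_of_continuous hP (by fun_prop)) _)

lemma integral_norm_sub_sq_eq (hP : carpetEq P) : ∫ x, ‖x - pt (1/2) (3/4)‖ ^ 2 ∂P = 7/32 := by
  have h := integral_eq_sum hP (g := fun x => ‖x - pt (1/2) (3/4)‖ ^ 2)
    fun i => integrable_of_continuous hP (by fun_prop)
  simp only [integral_norm_S_sub_sq hP] at h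
  -- `h` reads V = V / 9 + 7 / 36.
  generalize ∫ x, ‖x - pt (1/2) (3/4)‖ ^ 2 ∂P = V at h ⊢
  simp [Fin.sum_univ_four, prob, shift, pt_sub_pt, smul_pt, norm_pt_sq] at h
  linarith

lemma setIntegral_Jw_id (hP : carpetEq P) (w : List (Fin 4)) :
    ∫ x in Jw w, x ∂P = wordProb w • Sw w (pt (1/2) (3/4)) := by
  rw [setIntegral_Jw hP (f := fun x => x) continuous_id w, ← integral_id_eq hP,
    Sw_eq_smul_add w (∫ x, x ∂P), integral_congr_ae (ae_of_all _ (Sw_eq_smul_add w)),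
    integral_add (integrable_of_continuous hP (continuous_const_smul _)) (integrable_const _),
    integral_smul, integral_const]
  simp

lemma setIntegral_Jw_append_norm_sub_sq (hP : carpetEq P) (w v : List (Fin 4)) (q : E2) :
    ∫ x in Jw (w ++ v), ‖x - Sw w q‖ ^ 2 ∂P
      = wordProb (w ++ v) * ((9:ℝ)⁻¹ ^ w.length * ∫ x, ‖Sw v x - q‖ ^ 2 ∂P) := by
  rw [setIntegral_Jw hP (by fun_prop), smul_eq_mul]
  simp_rw [Sw_append, norm_Sw_sub_Sw_sq]
  rw [integral_const_mul]

lemma Err_eq (hP : carpetEq P) (w : List (Fin 4)) :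
    Err P w = wordProb w * ((9:ℝ)⁻¹ ^ w.length * (7/32)) := by
  have h := setIntegral_Jw_append_norm_sub_sq hP w [] (pt (1/2) (3/4))
  rw [List.append_nil] at h
  rw [Err, h]
  congr 2
  exact integral_norm_sub_sq_eq hP

lemma ctr_Jw_append_zero_union_one (hP : carpetEq P) (w : List (Fin 4)) :
    ctr P (Jw (w ++ [0]) ∪ Jw (w ++ [1])) = Sw w (pt (1/2) (1/4)) := by
  have hdisj := disjoint_Jw_append_singleton w (show (0 : Fin 4) ≠ 1 by decide)
  have hp := (wordProb_pos w).ne'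
  rw [ctr, ← measureReal_def, measureReal_union hdisj (measurableSet_Jw _),
    setIntegral_union hdisj (measurableSet_Jw _)
      (integrable_of_continuous hP (f := fun x => x) continuous_id).integrableOn
      (integrable_of_continuous hP (f := fun x => x) continuous_id).integrableOn,
    measureReal_Jw hP, measureReal_Jw hP, setIntegral_Jw_id hP, setIntegral_Jw_id hP,
    Sw_append, Sw_append]
  have h0 : wordProb (w ++ [0]) = wordProb w / 8 := by simp [wordProb, prob, div_eq_mul_inv]
  have h1 : wordProb (w ++ [1]) = wordProb w / 8 := by simp [wordProb, prob, div_eq_mul_inv]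
  rw [h0, h1, ← smul_add, smul_smul,
    show (wordProb w / 8 + wordProb w / 8)⁻¹ * (wordProb w / 8) = 2⁻¹ by field_simp; norm_num,
    Sw_midpoint]
  congr 1
  ext j; fin_cases j <;> norm_num [Sw, S, pt]

end ProbabilityMeasure

theorem Epair_12 (P : Measure E2) [IsProbabilityMeasure P] (hP : carpetEq P)
    (w : List (Fin 4)) :
    Epair P w 0 1 = (13/84) * Err P w := by
  have hdisj := disjoint_Jw_append_singleton w (show (0 : Fin 4) ≠ 1 by decide)
  have hint := integrable_of_continuous hP
    (f := fun x => ‖x - Sw w (pt (1/2) (1/4))‖ ^ 2) (by fun_prop)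
  rw [Epair, ctr_Jw_append_zero_union_one hP,
    setIntegral_union hdisj (measurableSet_Jw _) hint.integrableOn hint.integrableOn,
    setIntegral_Jw_append_norm_sub_sq hP, setIntegral_Jw_append_norm_sub_sq hP, Err_eq hP]
  have hhalf : ∀ i, ∫ x, ‖Sw [i] x - pt (1/2) (1/4)‖ ^ 2 ∂P = (9:ℝ)⁻¹ *
      (7/32 + ‖pt (1/2) (3/4) - (3:ℝ) • (pt (1/2) (1/4) - shift i)‖ ^ 2) := fun i => by
    rw [← integral_norm_sub_sq_eq hP]; exact integral_norm_S_sub_sq hP i _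
  rw [hhalf, hhalf]
  norm_num [shift, pt_sub_pt, smul_pt, norm_pt_sq, wordProb_append, wordProb, prob]
  ring
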